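/- arXiv:1703.02797 — 6 statements merged into one kernel-verified Lean document; each statement's English description precedes it below -/
import Mathlib

section
/- Under the dissipativity assumption Re Q_t ≤ 0 (negative semidefinite) for all t, the resolvent R(t,τ) of d/dt R = 2iF_t R, R(τ,τ) = I, with F_t = σQ_t, is non-negative: for all 0 ≤ τ ≤ t ≤ T and all X ∈ ℂ^{2n}, i(σ(conj(R(t,τ)X), R(t,τ)X) - σ(conj(X), X)) ≥ 0 (this quantity is real and non-negative). -/
open Matrix
open scoped ComplexOrder

attribute [local instance] Matrix.normedAddCommGroup Matrix.normedSpace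

/-- The standard symplectic matrix `[[0, Iₙ], [-Iₙ, 0]]`. -/
noncomputable def sympMat (n : ℕ) : Matrix (Fin n ⊕ Fin n) (Fin n ⊕ Fin n) ℂ :=
  Matrix.fromBlocks 0 1 (-1) 0

/-- The standard symplectic bilinear form `σ((x,ξ),(y,η)) = ⟨ξ,y⟩ - ⟨x,η⟩` on `ℂ^{2n}`. -/
noncomputable def sympForm (n : ℕ) (X Y : Fin n ⊕ Fin n → ℂ) : ℂ :=
  (sympMat n *ᵥ X) ⬝ᵥ Y

/-!
The energy `E(Y) = i σ(conj Y, Y)` is real, since `σ` is real and antisymmetric. Along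
`Y' = 2iσQY` its derivative is `-4 Re ⟨Y, QY⟩`, using `σᵀ = -σ` and `σ² = -1`. For symmetric `Q`,
`⟨Y, QY⟩` is the sum of the real quadratic forms of `Re Y` and `Im Y`, so dissipativity makes the
derivative non-negative. Hence `E(R(t,τ)X)` is non-decreasing in `t` and equals `E(X)` at `t = τ`.
-/

section Calculus

variable {𝕜 𝔸 ι : Type*} [NontriviallyNormedField 𝕜] [NormedCommRing 𝔸] [NormedAlgebra 𝕜 𝔸]
  [Fintype ι] {u v : 𝕜 → ι → 𝔸} {u' v' : ι → 𝔸} {x : 𝕜}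

theorem HasDerivAt.dotProduct (hu : HasDerivAt u u' x) (hv : HasDerivAt v v' x) :
    HasDerivAt (fun y => u y ⬝ᵥ v y) (u' ⬝ᵥ v x + u x ⬝ᵥ v') x := by
  unfold _root_.dotProduct
  rw [← Finset.sum_add_distrib]
  exact HasDerivAt.fun_sum fun i _ => (hasDerivAt_pi.1 hu i).mul (hasDerivAt_pi.1 hv i)

theorem HasDerivAt.mulVec {κ : Type*} {A : 𝕜 → Matrix κ ι 𝔸} {A' : Matrix κ ι 𝔸}
    (hA : HasDerivAt A A' x) (hv : HasDerivAt v v' x) :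
    HasDerivAt (fun y => A y *ᵥ v y) (A' *ᵥ v x + A x *ᵥ v') x :=
  hasDerivAt_pi.2 fun i => (hasDerivAt_pi.1 hA i).dotProduct hv

end Calculus

theorem Matrix.IsSymm.star_dotProduct_mulVec_self {ι : Type*} [Fintype ι] {Q : Matrix ι ι ℂ}
    (hQ : Q.IsSymm) (Y : ι → ℂ) :
    star Y ⬝ᵥ (Q *ᵥ Y) = (fun i => ((Y i).re : ℂ)) ⬝ᵥ (Q *ᵥ fun i => ((Y i).re : ℂ))
      + (fun i => ((Y i).im : ℂ)) ⬝ᵥ (Q *ᵥ fun i => ((Y i).im : ℂ)) := by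
  set a : ι → ℂ := fun i => ((Y i).re : ℂ)
  set b : ι → ℂ := fun i => ((Y i).im : ℂ)
  have hY : Y = a + Complex.I • b := by funext i; simp [a, b, Complex.ext_iff]
  have hstarY : star Y = a - Complex.I • b := by funext i; simp [a, b, Complex.ext_iff]
  have hcross : b ⬝ᵥ (Q *ᵥ a) = a ⬝ᵥ (Q *ᵥ b) := by
    rw [dotProduct_mulVec, ← vecMul_transpose, hQ.eq, dotProduct_comm]
  rw [hstarY, hY, mulVec_add, mulVec_smul, sub_dotProduct, dotProduct_add, dotProduct_add,
    smul_dotProduct, smul_dotProduct, dotProduct_smul, dotProduct_smul, hcross]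
  simp only [smul_eq_mul]
  linear_combination (-(b ⬝ᵥ (Q *ᵥ b))) * Complex.I_sq

theorem Matrix.IsSymm.re_star_dotProduct_mulVec_nonpos {ι : Type*} [Fintype ι]
    {Q : Matrix ι ι ℂ} (hQ : Q.IsSymm)
    (hQRe : ∀ X : ι → ℝ, ((fun i => (X i : ℂ)) ⬝ᵥ (Q *ᵥ fun i => (X i : ℂ))).re ≤ 0)
    (Y : ι → ℂ) : (star Y ⬝ᵥ (Q *ᵥ Y)).re ≤ 0 := by
  rw [hQ.star_dotProduct_mulVec_self, Complex.add_re]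
  linarith [hQRe fun i => (Y i).re, hQRe fun i => (Y i).im]

section Symplectic

variable {n : ℕ}

theorem sympMat_transpose : (sympMat n)ᵀ = -sympMat n := by
  rw [sympMat, fromBlocks_transpose, fromBlocks_neg]
  simp

theorem sympMat_mul_self : sympMat n * sympMat n = -1 := by
  rw [sympMat, fromBlocks_multiply, ← fromBlocks_one, fromBlocks_neg]
  simp

theorem star_sympMat_mulVec (v : Fin n ⊕ Fin n → ℂ) :
    star (sympMat n *ᵥ v) = sympMat n *ᵥ star v := by
  have hreal : (sympMat n).map star = sympMat n := by
    rw [sympMat, fromBlocks_map]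
    simp [Matrix.map_neg, Matrix.map_one]
  rw [star_mulVec, conjTranspose, transpose_map, hreal, vecMul_transpose]

theorem sympForm_swap (X Y : Fin n ⊕ Fin n → ℂ) : sympForm n X Y = -sympForm n Y X := by
  rw [sympForm, sympForm, dotProduct_comm, dotProduct_mulVec, ← vecMul_transpose (sympMat n),
    sympMat_transpose, vecMul_neg, neg_dotProduct, neg_neg]

theorem star_sympForm (X Y : Fin n ⊕ Fin n → ℂ) :
    star (sympForm n X Y) = sympForm n (star X) (star Y) := by
  rw [sympForm, sympForm, ← star_sympMat_mulVec, star_dotProduct_star, dotProduct_comm]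

theorem sympForm_sympMat_mulVec (X Z : Fin n ⊕ Fin n → ℂ) :
    sympForm n X (sympMat n *ᵥ Z) = X ⬝ᵥ Z := by
  rw [sympForm, ← vecMul_transpose, ← dotProduct_mulVec, mulVec_mulVec, sympMat_transpose,
    neg_mul, sympMat_mul_self, neg_neg, one_mulVec]

theorem sympForm_smul_left (c : ℂ) (X Y : Fin n ⊕ Fin n → ℂ) :
    sympForm n (c • X) Y = c * sympForm n X Y := by
  rw [sympForm, sympForm, mulVec_smul, smul_dotProduct, smul_eq_mul]

theorem sympForm_smul_right (c : ℂ) (X Y : Fin n ⊕ Fin n → ℂ) :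
    sympForm n X (c • Y) = c * sympForm n X Y := by
  rw [sympForm, sympForm, dotProduct_smul, smul_eq_mul]

theorem im_I_mul_sympForm_star_self (Y : Fin n ⊕ Fin n → ℂ) :
    (Complex.I * sympForm n (star Y) Y).im = 0 := by
  have hanti : star (sympForm n (star Y) Y) = -sympForm n (star Y) Y := by
    rw [star_sympForm, star_star, sympForm_swap]
  rw [← Complex.conj_eq_iff_im, map_mul, Complex.conj_I]
  change -Complex.I * star (sympForm n (star Y) Y) = _
  rw [hanti, neg_mul_neg]

theorem hasDerivAt_sympForm_star_self {Y : ℝ → Fin n ⊕ Fin n → ℂ} {Y' : Fin n ⊕ Fin n → ℂ}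
    {s : ℝ} (hY : HasDerivAt Y Y' s) :
    HasDerivAt (fun s => sympForm n (star (Y s)) (Y s))
      (sympForm n (star Y') (Y s) + sympForm n (star (Y s)) Y') s := by
  simpa [sympForm] using ((hasDerivAt_const s (sympMat n)).mulVec hY.star).dotProduct hY

theorem re_I_mul_sympForm_flow (Q : Matrix (Fin n ⊕ Fin n) (Fin n ⊕ Fin n) ℂ)
    (Y : Fin n ⊕ Fin n → ℂ) :
    (Complex.I * (sympForm n (star ((2 * Complex.I) • (sympMat n *ᵥ (Q *ᵥ Y)))) Y
      + sympForm n (star Y) ((2 * Complex.I) • (sympMat n *ᵥ (Q *ᵥ Y))))).re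
      = -(4 * (star Y ⬝ᵥ (Q *ᵥ Y)).re) := by
  have hright : sympForm n (star Y) (sympMat n *ᵥ (Q *ᵥ Y)) = star Y ⬝ᵥ (Q *ᵥ Y) :=
    sympForm_sympMat_mulVec _ _
  have hleft : sympForm n (star (sympMat n *ᵥ (Q *ᵥ Y))) Y = -star (star Y ⬝ᵥ (Q *ᵥ Y)) := by
    rw [sympForm_swap, ← hright, star_sympForm, star_star]
  set z := star Y ⬝ᵥ (Q *ᵥ Y)
  have hstar : star (2 * Complex.I) = -(2 * Complex.I) := by simp
  have hsum : Complex.I * (-(2 * Complex.I) * -star z + 2 * Complex.I * z)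
      = ((-(4 * z.re) : ℝ) : ℂ) := by
    have hre := Complex.add_conj z
    push_cast at hre ⊢
    rw [Complex.star_def]
    linear_combination (2 * (z + starRingEnd ℂ z)) * Complex.I_sq - 2 * hre
  rw [star_smul, sympForm_smul_left, sympForm_smul_right, hleft, hright, hstar, hsum,
    Complex.ofReal_re]

variable {Q : ℝ → Matrix (Fin n ⊕ Fin n) (Fin n ⊕ Fin n) ℂ} {Y : ℝ → Fin n ⊕ Fin n → ℂ}
  {a b : ℝ}

theorem monotoneOn_re_I_mul_sympForm_star_self
    (hQ : ∀ s ∈ Set.Icc a b, ∀ Z, (star Z ⬝ᵥ (Q s *ᵥ Z)).re ≤ 0)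
    (hY : ∀ s ∈ Set.Icc a b,
      HasDerivAt Y ((2 * Complex.I) • (sympMat n *ᵥ (Q s *ᵥ Y s))) s) :
    MonotoneOn (fun s => (Complex.I * sympForm n (star (Y s)) (Y s)).re) (Set.Icc a b) := by
  have hderiv : ∀ s ∈ Set.Icc a b,
      HasDerivAt (fun s => (Complex.I * sympForm n (star (Y s)) (Y s)).re)
        (-(4 * (star (Y s) ⬝ᵥ (Q s *ᵥ Y s)).re)) s := by
    intro s hs
    rw [← re_I_mul_sympForm_flow]
    exact Complex.reCLM.hasFDerivAt.comp_hasDerivAt s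
      ((hasDerivAt_sympForm_star_self (hY s hs)).const_mul Complex.I)
  refine monotoneOn_of_hasDerivWithinAt_nonneg (convex_Icc a b)
    (fun s hs => (hderiv s hs).continuousAt.continuousWithinAt)
    (fun s hs => (hderiv s (interior_subset hs)).hasDerivWithinAt) fun s hs => ?_
  linarith [hQ s (interior_subset hs) (Y s)]

theorem I_mul_sympForm_star_self_le
    (hQ : ∀ s ∈ Set.Icc a b, ∀ Z, (star Z ⬝ᵥ (Q s *ᵥ Z)).re ≤ 0)
    (hY : ∀ s ∈ Set.Icc a b,
      HasDerivAt Y ((2 * Complex.I) • (sympMat n *ᵥ (Q s *ᵥ Y s))) s) (hab : a ≤ b) :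
    Complex.I * sympForm n (star (Y a)) (Y a) ≤ Complex.I * sympForm n (star (Y b)) (Y b) :=
  Complex.le_def.2
    ⟨monotoneOn_re_I_mul_sympForm_star_self hQ hY (Set.left_mem_Icc.2 hab)
      (Set.right_mem_Icc.2 hab) hab,
    by rw [im_I_mul_sympForm_star_self, im_I_mul_sympForm_star_self]⟩

end Symplectic

theorem resolvent_nonneg_general (n : ℕ) (T : ℝ)
    (Q : ℝ → Matrix (Fin n ⊕ Fin n) (Fin n ⊕ Fin n) ℂ)
    (hQsymm : ∀ t ∈ Set.Icc (0 : ℝ) T, (Q t).IsSymm)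
    (hQRe : ∀ t ∈ Set.Icc (0 : ℝ) T, ∀ X : Fin n ⊕ Fin n → ℝ,
      ((fun i => (X i : ℂ)) ⬝ᵥ (Q t *ᵥ fun i => (X i : ℂ))).re ≤ 0)
    (R : ℝ → ℝ → Matrix (Fin n ⊕ Fin n) (Fin n ⊕ Fin n) ℂ)
    (hR : ∀ τ ∈ Set.Icc (0 : ℝ) T, ∀ t ∈ Set.Icc (0 : ℝ) T,
      HasDerivAt (fun s => R s τ) ((2 * Complex.I) • (sympMat n * Q t * R t τ)) t)
    (hRinit : ∀ τ ∈ Set.Icc (0 : ℝ) T, R τ τ = 1) :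
    ∀ τ t : ℝ, 0 ≤ τ → τ ≤ t → t ≤ T → ∀ X : Fin n ⊕ Fin n → ℂ,
      0 ≤ Complex.I * (sympForm n (star (R t τ *ᵥ X)) (R t τ *ᵥ X)
            - sympForm n (star X) X) := by
  intro τ t hτ hτt htT X
  have hτmem : τ ∈ Set.Icc 0 T := ⟨hτ, hτt.trans htT⟩
  have hsub : Set.Icc τ t ⊆ Set.Icc 0 T := Set.Icc_subset_Icc hτ htT
  have hQ : ∀ s ∈ Set.Icc τ t, ∀ Z, (star Z ⬝ᵥ (Q s *ᵥ Z)).re ≤ 0 := fun s hs =>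
    (hQsymm s (hsub hs)).re_star_dotProduct_mulVec_nonpos (hQRe s (hsub hs))
  have hY : ∀ s ∈ Set.Icc τ t, HasDerivAt (fun s => R s τ *ᵥ X)
      ((2 * Complex.I) • (sympMat n *ᵥ (Q s *ᵥ (R s τ *ᵥ X)))) s := fun s hs => by
    have hRX := (hR τ hτmem s (hsub hs)).mulVec (hasDerivAt_const s X)
    rwa [mulVec_zero, add_zero, smul_mulVec, ← mulVec_mulVec, ← mulVec_mulVec] at hRX
  have hmono := I_mul_sympForm_star_self_le hQ hY hτt
  rwa [hRinit τ hτmem, one_mulVec, ← sub_nonneg, ← mul_sub] at hmono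

/-- Under the dissipativity assumption `Re Q_t ≤ 0`, the resolvent of
`d/dt R = 2iF_t R`, `R(τ,τ) = I`, with `F_t = σQ_t`, is non-negative:
for `0 ≤ τ ≤ t ≤ T` and all `X ∈ ℂ^{2n}`,
`i(σ(conj(R(t,τ)X), R(t,τ)X) - σ(conj X, X))` is a non-negative real number. -/
theorem resolvent_nonneg (n : ℕ) (T : ℝ) (hT : 0 < T)
    (Q : ℝ → Matrix (Fin n ⊕ Fin n) (Fin n ⊕ Fin n) ℂ)
    (hQsymm : ∀ t ∈ Set.Icc (0 : ℝ) T, (Q t).IsSymm)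
    (hQcont : ContinuousOn Q (Set.Icc (0 : ℝ) T))
    (hQRe : ∀ t ∈ Set.Icc (0 : ℝ) T, ∀ X : Fin n ⊕ Fin n → ℝ,
      ((fun i => (X i : ℂ)) ⬝ᵥ (Q t *ᵥ fun i => (X i : ℂ))).re ≤ 0)
    (R : ℝ → ℝ → Matrix (Fin n ⊕ Fin n) (Fin n ⊕ Fin n) ℂ)
    (hR : ∀ τ ∈ Set.Icc (0 : ℝ) T, ∀ t ∈ Set.Icc (0 : ℝ) T,
      HasDerivAt (fun s => R s τ) ((2 * Complex.I) • (sympMat n * Q t * R t τ)) t)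
    (hRinit : ∀ τ ∈ Set.Icc (0 : ℝ) T, R τ τ = 1) :
    ∀ τ t : ℝ, 0 ≤ τ → τ ≤ t → t ≤ T → ∀ X : Fin n ⊕ Fin n → ℂ,
      0 ≤ Complex.I * (sympForm n (star (R t τ *ᵥ X)) (R t τ *ᵥ X)
            - sympForm n (star X) X) :=
  resolvent_nonneg_general n T Q hQsymm hQRe R hR hRinit
end

section
/- The matrix function t ↦ S(t,τ) = -i(R(t,τ) - I)(R(t,τ) + I)^{-1}, where R solves d/dt R = 2iF_t R, R(τ,τ) = I, satisfies the matrix Riccati differential equation ∂_t S(t,τ) = F_t - i(S(t,τ)F_t - F_t S(t,τ)) + S(t,τ)F_t S(t,τ) on any interval where R(t,τ) + I is invertible. -/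
open Matrix

attribute [local instance] Matrix.normedAddCommGroup Matrix.normedSpace

namespace CayleyAux

variable {n : ℕ}

/-- Abbreviation for the space of `2n × 2n` complex matrices. -/
abbrev Mat (n : ℕ) := Matrix (Fin n ⊕ Fin n) (Fin n ⊕ Fin n) ℂ

/-- Matrix multiplication as a continuous bilinear map (finite dimensions). -/
noncomputable def mulL (n : ℕ) : Mat n →L[ℝ] Mat n →L[ℝ] Mat n :=
  LinearMap.toContinuousLinearMap
    { toFun := fun X => LinearMap.toContinuousLinearMap
        { toFun := fun Y => X * Y
          map_add' := fun a b => by simp [mul_add]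
          map_smul' := fun c a => by simp [Matrix.mul_smul] }
      map_add' := fun a b => by ext Y; simp [add_mul]
      map_smul' := fun c a => by ext Y; simp [Matrix.smul_mul] }

@[simp] lemma mulL_apply (X Y : Mat n) : mulL n X Y = X * Y := rfl

/-- Leibniz rule for matrix-valued functions (sup-norm instances). -/
lemma hasDerivWithinAt_matmul {f g : ℝ → Mat n} {f' g' : Mat n} {s : Set ℝ} {x : ℝ}
    (hf : HasDerivWithinAt f f' s x) (hg : HasDerivWithinAt g g' s x) :
    HasDerivWithinAt (fun u => f u * g u) (f' * g x + f x * g') s x := by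
  have hb := (mulL n).isBoundedBilinearMap
  have h := (hb.hasFDerivAt (f x, g x)).comp_hasDerivWithinAt x (hf.prodMk hg)
  refine h.congr_deriv ?_
  rw [hb.deriv_apply]
  simp [add_comm]
  rfl

/-- Matrix entry as a continuous linear map. -/
noncomputable def entryL (n : ℕ) (i j : Fin n ⊕ Fin n) : Mat n →L[ℝ] ℂ :=
  LinearMap.toContinuousLinearMap
    { toFun := fun X => X i j
      map_add' := fun _ _ => rfl
      map_smul' := fun _ _ => rfl }

@[simp] lemma entryL_apply (i j : Fin n ⊕ Fin n) (X : Mat n) : entryL n i j X = X i j := rfl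

lemma entry_diff {f : ℝ → Mat n} {s : Set ℝ} {x : ℝ}
    (hf : DifferentiableWithinAt ℝ f s x) (i j : Fin n ⊕ Fin n) :
    DifferentiableWithinAt ℝ (fun u => f u i j) s x :=
  ((entryL n i j).differentiable.differentiableAt).comp_differentiableWithinAt x hf

lemma det_diff {f : ℝ → Mat n} {s : Set ℝ} {x : ℝ}
    (h : ∀ i j, DifferentiableWithinAt ℝ (fun u => f u i j) s x) :
    DifferentiableWithinAt ℝ (fun u => (f u).det) s x := by
  simp only [Matrix.det_apply']
  refine DifferentiableWithinAt.fun_sum fun σ _ => DifferentiableWithinAt.const_mul ?_ _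
  exact DifferentiableWithinAt.fun_finsetProd fun i _ => h _ _

lemma adjugate_entry_diff {f : ℝ → Mat n} {s : Set ℝ} {x : ℝ}
    (h : ∀ i j, DifferentiableWithinAt ℝ (fun u => f u i j) s x) (i j : Fin n ⊕ Fin n) :
    DifferentiableWithinAt ℝ (fun u => (f u).adjugate i j) s x := by
  simp only [Matrix.adjugate_apply]
  refine det_diff fun k l => ?_
  simp only [Matrix.updateRow_apply]
  by_cases hk : k = j <;> simp [hk]
  · exact differentiableWithinAt_const _
  · exact h _ _

/-- Differentiability of the matrix inverse via Cramer's rule. -/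
lemma inv_diff {f : ℝ → Mat n} {s : Set ℝ} {x : ℝ}
    (hf : DifferentiableWithinAt ℝ f s x) (hdet : (f x).det ≠ 0) :
    DifferentiableWithinAt ℝ (fun u => (f u)⁻¹) s x := by
  have hfun : (fun u => (f u)⁻¹) = fun u => ((f u).det)⁻¹ • (f u).adjugate := by
    funext u; rw [Matrix.inv_def, Ring.inverse_eq_inv']
  rw [hfun]
  have hd : DifferentiableWithinAt ℝ (fun u => ((f u).det)⁻¹) s x :=
    (det_diff fun i j => entry_diff hf i j).inv hdet
  have hadj : DifferentiableWithinAt ℝ (fun u => (f u).adjugate) s x := by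
    apply differentiableWithinAt_pi.2
    intro i
    apply differentiableWithinAt_pi.2
    intro j
    exact adjugate_entry_diff (fun i j => entry_diff hf i j) i j
  exact hd.smul hadj

/-- Within a singleton, anything is a derivative. -/
lemma hasDerivWithinAt_singleton' (f : ℝ → Mat n) (f' : Mat n) (x : ℝ) :
    HasDerivWithinAt f f' {x} x := by
  refine hasDerivWithinAt_iff_tendsto_slope.2 ?_
  simp [Set.diff_self]

/-- The key algebraic identity behind the Riccati equation. -/
lemma riccati_identity (G Rt A : Mat n) (h1 : (Rt + 1) * A = 1) :
    G - Complex.I • (((-Complex.I) • ((Rt - 1) * A)) * G - G * ((-Complex.I) • ((Rt - 1) * A)))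
      + ((-Complex.I) • ((Rt - 1) * A)) * G * ((-Complex.I) • ((Rt - 1) * A))
    = (-Complex.I) • ((2 * Complex.I) • (G * Rt) * A
        + (Rt - 1) * -(A * ((2 * Complex.I) • (G * Rt)) * A)) := by
  have RA : Rt * A = 1 - A := by
    rw [eq_sub_iff_add_eq]; rw [add_mul, one_mul] at h1; exact h1
  have R1A : (Rt - 1) * A = 1 - A - A := by
    rw [sub_mul, one_mul, RA]
  have e1 : (2 * Complex.I) • (G * Rt) * A = (2 * Complex.I) • (G * (1 - A)) := by
    rw [smul_mul_assoc, mul_assoc, RA]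
  have e2 : A * ((2 * Complex.I) • (G * Rt)) * A = (2 * Complex.I) • (A * (G * (1 - A))) := by
    rw [mul_smul_comm, smul_mul_assoc, mul_assoc, mul_assoc, RA]
  have e3 : (Rt - 1) * -((2 * Complex.I) • (A * (G * (1 - A))))
      = -((2 * Complex.I) • ((1 - A - A) * (G * (1 - A)))) := by
    rw [mul_neg, mul_smul_comm, ← mul_assoc, R1A]
  rw [e1, e2, e3, R1A]
  simp only [smul_sub, smul_add, smul_smul, smul_neg, neg_smul, neg_neg, neg_sub,
    mul_sub, sub_mul, mul_add, add_mul, mul_one, one_mul, neg_mul, mul_neg,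
    smul_mul_assoc, mul_smul_comm, mul_assoc]
  match_scalars <;> (try ring_nf) <;> (try simp [Complex.I_sq]) <;> (try ring_nf)

end CayleyAux

open CayleyAux

/-- On any interval where `R(t,τ) + I` is invertible, the Cayley transform
`S(t) = -i(R(t) - I)(R(t) + I)⁻¹` of the resolvent of `d/dt R = 2iF_t R`, `R(τ) = I`,
satisfies the matrix Riccati equation `∂_t S = F_t - i(S F_t - F_t S) + S F_t S`. -/
theorem cayley_riccati_in_t (n : ℕ)
    (F : ℝ → Matrix (Fin n ⊕ Fin n) (Fin n ⊕ Fin n) ℂ) (hFcont : Continuous F)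
    (s : Set ℝ) (hconv : Convex ℝ s) (τ : ℝ) (hτ : τ ∈ s)
    (R : ℝ → Matrix (Fin n ⊕ Fin n) (Fin n ⊕ Fin n) ℂ)
    (hR : ∀ t ∈ s, HasDerivWithinAt R ((2 * Complex.I) • (F t * R t)) s t)
    (hRτ : R τ = 1)
    (hinv : ∀ t ∈ s, IsUnit (R t + 1).det) :
    ∀ t ∈ s,
      HasDerivWithinAt (fun u => (-Complex.I) • ((R u - 1) * (R u + 1)⁻¹))
        (F t - Complex.I • (((-Complex.I) • ((R t - 1) * (R t + 1)⁻¹)) * F t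
            - F t * ((-Complex.I) • ((R t - 1) * (R t + 1)⁻¹)))
          + ((-Complex.I) • ((R t - 1) * (R t + 1)⁻¹)) * F t
            * ((-Complex.I) • ((R t - 1) * (R t + 1)⁻¹))) s t := by
  intro t ht
  by_cases hsub : s.Subsingleton
  · have hst : s = {t} := hsub.eq_singleton_of_mem ht
    rw [hst]
    exact hasDerivWithinAt_singleton' _ _ _
  -- `s` has at least two points, so derivatives within `s` are unique.
  have hUD : UniqueDiffWithinAt ℝ s t := by
    obtain ⟨a, has, b, hbs, hab⟩ := Set.not_subsingleton_iff.1 hsub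
    have hlo : min a b ∈ s := by rcases min_cases a b with ⟨h, _⟩ | ⟨h, _⟩ <;> rw [h] <;> assumption
    have hhi : max a b ∈ s := by rcases max_cases a b with ⟨h, _⟩ | ⟨h, _⟩ <;> rw [h] <;> assumption
    have hlt : min a b < max a b := min_lt_max.2 hab
    have hIcc : Set.Icc (min a b) (max a b) ⊆ s := hconv.ordConnected.out hlo hhi
    have hint : (interior s).Nonempty := by
      refine ⟨(min a b + max a b) / 2, ?_⟩
      have : Set.Ioo (min a b) (max a b) ⊆ interior s := by
        rw [← interior_Icc]; exact interior_mono hIcc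
      exact this ⟨by linarith, by linarith⟩
    exact uniqueDiffWithinAt_convex hconv hint (subset_closure ht)
  have hdet := hinv t ht
  set A := (R t + 1)⁻¹ with hA
  have h1 : (R t + 1) * A = 1 := Matrix.mul_nonsing_inv _ hdet
  have h2 : A * (R t + 1) = 1 := Matrix.nonsing_inv_mul _ hdet
  set D := (2 * Complex.I) • (F t * R t) with hD
  -- differentiability of the inverse
  have hBdiff : DifferentiableWithinAt ℝ (fun u => (R u + 1)⁻¹) s t :=
    inv_diff ((hR t ht).differentiableWithinAt.add_const 1)
      (by simpa using hdet.ne_zero)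
  set E := derivWithin (fun u => (R u + 1)⁻¹) s t with hEdef
  have hE : HasDerivWithinAt (fun u => (R u + 1)⁻¹) E s t := hBdiff.hasDerivWithinAt
  -- differentiate the identity (R+1)(R+1)⁻¹ = 1 to compute E
  have hprod : HasDerivWithinAt (fun u => (R u + 1) * (R u + 1)⁻¹) (D * A + (R t + 1) * E) s t :=
    hasDerivWithinAt_matmul ((hR t ht).add_const 1) hE
  have hconst : HasDerivWithinAt (fun _ : ℝ => (1 : Mat n)) (D * A + (R t + 1) * E) s t :=
    hprod.congr (fun u hu => (Matrix.mul_nonsing_inv _ (hinv u hu)).symm) h1.symm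
  have hzero : D * A + (R t + 1) * E = 0 :=
    UniqueDiffWithinAt.eq_deriv _ hUD hconst (hasDerivWithinAt_const _ _ _)
  have hEeq : E = -(A * D * A) := by
    have h3 : (R t + 1) * E = -(D * A) := by
      rw [eq_neg_iff_add_eq_zero, add_comm]; exact hzero
    calc E = (A * (R t + 1)) * E := by rw [h2, one_mul]
      _ = A * ((R t + 1) * E) := by rw [mul_assoc]
      _ = A * -(D * A) := by rw [h3]
      _ = -(A * D * A) := by rw [mul_neg, mul_assoc]
  -- derivative of the Cayley transform
  have hfinal : HasDerivWithinAt (fun u => (-Complex.I) • ((R u - 1) * (R u + 1)⁻¹))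
      ((-Complex.I) • (D * A + (R t - 1) * E)) s t :=
    (hasDerivWithinAt_matmul ((hR t ht).sub_const 1) hE).const_smul (-Complex.I)
  rw [hEeq] at hfinal
  convert hfinal using 1
  exact riccati_identity (F t) (R t) A h1
end

section
/- The matrix function τ ↦ S(t,τ) = -i(R(t,τ) - I)(R(t,τ) + I)^{-1} satisfies ∂_τ S(t,τ) = -F_τ - i(S(t,τ)F_τ - F_τ S(t,τ)) - S(t,τ)F_τ S(t,τ) on any interval where R(t,τ) + I is invertible, using ∂_τ R(t,τ) = -2iR(t,τ)F_τ. -/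
open Matrix

attribute [local instance] Matrix.normedAddCommGroup Matrix.normedSpace

section aux
variable {m : Type*} [Fintype m] [DecidableEq m]

theorem matrix_hasDerivWithinAt_mul {f g : ℝ → Matrix m m ℂ} {f' g' : Matrix m m ℂ}
    {s : Set ℝ} {τ : ℝ}
    (hf : HasDerivWithinAt f f' s τ) (hg : HasDerivWithinAt g g' s τ) :
    HasDerivWithinAt (fun u => f u * g u) (f' * g τ + f τ * g') s τ := by
  have hgc : Filter.Tendsto g (nhdsWithin τ (s \ {τ})) (nhds (g τ)) :=
    (hg.continuousWithinAt.tendsto).mono_left (nhdsWithin_mono _ Set.diff_subset)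
  erw [hasDerivWithinAt_iff_tendsto_slope] at hf hg ⊢
  have key : ∀ u : ℝ,
      slope (fun u => f u * g u) τ u = slope f τ u * g u + f τ * slope g τ u := by
    intro u
    simp only [slope_def_module, smul_mul_assoc, mul_smul_comm, ← smul_add]
    congr 1
    rw [sub_mul, mul_sub]
    abel
  have hcm : @ContinuousMul (Matrix m m ℂ) PseudoMetricSpace.toUniformSpace.toTopologicalSpace _ :=
    Matrix.topologicalRing.toContinuousMul
  refine Filter.Tendsto.congr' ?_ ((hf.mul hgc).add (Filter.Tendsto.mul tendsto_const_nhds hg))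
  filter_upwards with u
  exact (key u).symm

theorem matrix_hasDerivWithinAt_inv {B : ℝ → Matrix m m ℂ} {B' : Matrix m m ℂ}
    {s : Set ℝ} {τ : ℝ} (hτ : τ ∈ s)
    (hB : HasDerivWithinAt B B' s τ) (hu : ∀ u ∈ s, IsUnit (B u).det) :
    HasDerivWithinAt (fun u => (B u)⁻¹) (-((B τ)⁻¹ * B' * (B τ)⁻¹)) s τ := by
  have hne : (B τ).det ≠ 0 := (hu τ hτ).ne_zero
  have hci : ContinuousAt Inv.inv (B τ) :=
    continuousAt_matrix_inv _ (by rw [Ring.inverse_eq_inv']; exact continuousAt_inv₀ hne)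
  have hgc : Filter.Tendsto (fun u => (B u)⁻¹) (nhdsWithin τ (s \ {τ})) (nhds (B τ)⁻¹) :=
    (hci.comp_continuousWithinAt hB.continuousWithinAt).tendsto.mono_left
      (nhdsWithin_mono _ Set.diff_subset)
  erw [hasDerivWithinAt_iff_tendsto_slope] at hB ⊢
  have key : ∀ u ∈ s \ ({τ} : Set ℝ),
      slope (fun u => (B u)⁻¹) τ u = -((B u)⁻¹ * slope B τ u * (B τ)⁻¹) := by
    intro u hu'
    have h1 : (B u)⁻¹ * (B τ - B u) * (B τ)⁻¹ = (B u)⁻¹ - (B τ)⁻¹ := by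
      rw [mul_sub, sub_mul, mul_assoc, Matrix.mul_nonsing_inv _ (hu τ hτ),
        Matrix.nonsing_inv_mul _ (hu u hu'.1), mul_one, one_mul]
    rw [slope_def_module, slope_def_module, ← h1]
    simp only [mul_smul_comm, smul_mul_assoc, ← smul_neg]
    congr 1
    rw [mul_sub, sub_mul, mul_sub, sub_mul, neg_sub]
  refine Filter.Tendsto.congr' ?_ (((hgc.mul hB).mul tendsto_const_nhds).neg)
  filter_upwards [self_mem_nhdsWithin] with u hu'
  exact (key u hu').symm

end aux

/-- On any interval where `R(t,τ) + I` is invertible, the Cayley transform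
`S(τ) = -i(R(τ) - I)(R(τ) + I)⁻¹` of the resolvent (as a function of the second variable,
satisfying `∂_τ R(t,τ) = -2i R(t,τ) F_τ`) satisfies the matrix Riccati equation
`∂_τ S = -F_τ - i(S F_τ - F_τ S) - S F_τ S`. -/
theorem cayley_riccati_in_tau (n : ℕ)
    (F : ℝ → Matrix (Fin n ⊕ Fin n) (Fin n ⊕ Fin n) ℂ) (hFcont : Continuous F)
    (s : Set ℝ) (hconv : Convex ℝ s)
    (R : ℝ → Matrix (Fin n ⊕ Fin n) (Fin n ⊕ Fin n) ℂ)
    (hR : ∀ τ ∈ s, HasDerivWithinAt R ((-(2 * Complex.I)) • (R τ * F τ)) s τ)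
    (hinv : ∀ τ ∈ s, IsUnit (R τ + 1).det) :
    ∀ τ ∈ s,
      HasDerivWithinAt (fun u => (-Complex.I) • ((R u - 1) * (R u + 1)⁻¹))
        (-F τ - Complex.I • (((-Complex.I) • ((R τ - 1) * (R τ + 1)⁻¹)) * F τ
            - F τ * ((-Complex.I) • ((R τ - 1) * (R τ + 1)⁻¹)))
          - ((-Complex.I) • ((R τ - 1) * (R τ + 1)⁻¹)) * F τ
            * ((-Complex.I) • ((R τ - 1) * (R τ + 1)⁻¹))) s τ := by
  intro τ hτ
  set J := (R τ + 1)⁻¹ with hJ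
  have hAJ : (R τ + 1) * J = 1 := Matrix.mul_nonsing_inv _ (hinv τ hτ)
  have hJA : J * (R τ + 1) = 1 := Matrix.nonsing_inv_mul _ (hinv τ hτ)
  have hRJ : R τ * J = 1 - J := by rw [add_mul, one_mul] at hAJ; exact eq_sub_of_add_eq hAJ
  have hJR : J * R τ = 1 - J := by rw [mul_add, mul_one] at hJA; exact eq_sub_of_add_eq hJA
  have hB : HasDerivWithinAt (fun u => R u + 1) ((-(2 * Complex.I)) • (R τ * F τ)) s τ :=
    (hR τ hτ).add_const 1
  have hg := matrix_hasDerivWithinAt_inv hτ hB hinv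
  have hf : HasDerivWithinAt (fun u => R u - 1) ((-(2 * Complex.I)) • (R τ * F τ)) s τ :=
    (hR τ hτ).sub_const 1
  have hprod := (matrix_hasDerivWithinAt_mul hf hg).const_smul (-Complex.I)
  refine hprod.congr_deriv (Eq.symm ?_)
  -- now prove the derivative identity
  have hM : (R τ - 1) * J = 1 - (2 : ℂ) • J := by
    rw [sub_mul, one_mul, hRJ, sub_sub, ← two_smul ℂ J]
  rw [← hJ, hM]
  rw [show J * ((-(2 * Complex.I)) • (R τ * F τ)) * J
      = (-(2 * Complex.I)) • ((F τ - J * F τ) * J) from by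
    rw [mul_smul_comm, smul_mul_assoc, ← mul_assoc, hJR, sub_mul, one_mul]]
  simp only [smul_mul_assoc, mul_smul_comm, smul_neg, neg_smul, smul_smul, mul_neg, neg_mul,
    neg_neg, mul_sub, sub_mul, mul_add, add_mul, one_mul, mul_one, smul_sub, smul_add, mul_assoc]
  rw [show R τ * (J * (F τ * J)) = F τ * J - J * (F τ * J) from by
    rw [← mul_assoc, hRJ, sub_mul, one_mul]]
  match_scalars <;> (try ring1) <;> (ring_nf; simp [Complex.I_sq]; try ring1)
end

section
/- With Y₁(τ) = 0, Y₂(τ) = I in the linear system Y' = M(t)Y with M(t) = [[iF_t, -F_t],[F_t, iF_t]], one has Y₁(t) = (i/2)(R(t,τ) - I) and Y₂(t) = (1/2)(R(t,τ) + I), hence -Y₁(t)Y₂(t)^{-1} = -i(R(t,τ) - I)(R(t,τ) + I)^{-1} whenever R(t,τ) + I is invertible. -/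
/-!
`Y₂ + i Y₁` has derivative zero, so it stays equal to `1`, while `Y₂ - i Y₁` solves the linear
equation `V' = 2i F_t V` with `V(τ) = 1`, so it coincides with `R(·, τ)` by uniqueness of
solutions of linear ODEs with continuous coefficients. Solving these two linear relations for
`Y₁`, `Y₂` gives the formulas, and the Cayley-transform identity is then pure algebra.
-/

open Matrix

attribute [local instance] Matrix.normedAddCommGroup Matrix.normedSpace

open Set Complex

theorem ODE_solution_unique_linear {E : Type*} [NormedAddCommGroup E] [NormedSpace ℝ E]
    {A : ℝ → E →L[ℝ] E} (hA : Continuous A) {f g : ℝ → E}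
    (hf : ∀ t, HasDerivAt f (A t (f t)) t) (hg : ∀ t, HasDerivAt g (A t (g t)) t)
    {t₀ : ℝ} (heq : f t₀ = g t₀) : f = g := by
  ext t
  obtain ⟨a, b, ht, ht₀⟩ : ∃ a b, t ∈ Ioo a b ∧ t₀ ∈ Ioo a b :=
    ⟨min t t₀ - 1, max t t₀ + 1, by grind, by grind⟩
  obtain ⟨K, hK⟩ := ((isCompact_Icc (a := a) (b := b)).image hA.nnnorm).bddAbove
  exact ODE_solution_unique_of_mem_Ioo (s := fun _ => univ)
    (fun s hs => ((A s).lipschitz.weaken (hK ⟨s, Ioo_subset_Icc_self hs, rfl⟩)).lipschitzOnWith)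
    ht₀ (fun s _ => ⟨hf s, trivial⟩) (fun s _ => ⟨hg s, trivial⟩) heq ht

theorem smul_eq_of_add_I_smul_of_sub_I_smul {M : Type*} [AddCommGroup M] [Module ℂ M]
    {y₁ y₂ u v : M} (hu : y₂ + I • y₁ = u) (hv : y₂ - I • y₁ = v) :
    y₁ = (I / 2) • (v - u) ∧ y₂ = (1 / 2 : ℂ) • (v + u) := by
  subst hu hv
  constructor
  · match_scalars <;> grind [I_mul_I]
  · module

variable {m : Type*} [Fintype m]

noncomputable def Matrix.mulLeftCLM [DecidableEq m] :
    Matrix m m ℂ →L[ℝ] Matrix m m ℂ →L[ℝ] Matrix m m ℂ :=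
  LinearMap.toContinuousLinearMap
    (LinearMap.toContinuousLinearMap.toLinearMap ∘ₗ LinearMap.mul ℝ (Matrix m m ℂ))

theorem Matrix.smul_mul_smul_inv_eq [DecidableEq m] (R : Matrix m m ℂ) (a : ℂ)
    (hdet : IsUnit (R + 1).det) :
    (a • (R - 1)) * ((1 / 2 : ℂ) • (R + 1))⁻¹ = (2 * a) • ((R - 1) * (R + 1)⁻¹) := by
  have : Invertible (1 / 2 : ℂ) := invertibleOfNonzero (by norm_num)
  rw [Matrix.inv_smul _ _ hdet, smul_mul_smul_comm, invOf_eq_inv]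
  norm_num [mul_comm]

section BlockSystem

variable {F Y₁ Y₂ : ℝ → Matrix m m ℂ}
  (hY₁ : ∀ t, HasDerivAt Y₁ (I • (F t * Y₁ t) - F t * Y₂ t) t)
  (hY₂ : ∀ t, HasDerivAt Y₂ (F t * Y₁ t + I • (F t * Y₂ t)) t)
include hY₁ hY₂

theorem hasDerivAt_add_I_smul (t : ℝ) : HasDerivAt (fun s => Y₂ s + I • Y₁ s) 0 t := by
  refine ((hY₂ t).add ((hY₁ t).const_smul I)).congr_deriv ?_
  simp only [smul_sub, smul_smul, I_mul_I, neg_one_smul]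
  abel

theorem hasDerivAt_sub_I_smul (t : ℝ) :
    HasDerivAt (fun s => Y₂ s - I • Y₁ s) ((2 * I) • (F t * (Y₂ t - I • Y₁ t))) t := by
  refine ((hY₂ t).sub ((hY₁ t).const_smul I)).congr_deriv ?_
  simp only [mul_sub, mul_smul_comm, smul_sub, smul_smul, I_mul_I, neg_one_smul]
  match_scalars <;> grind [I_mul_I]

theorem add_I_smul_eq_const (τ t : ℝ) : Y₂ t + I • Y₁ t = Y₂ τ + I • Y₁ τ :=
  is_const_of_deriv_eq_zero (fun s => (hasDerivAt_add_I_smul hY₁ hY₂ s).differentiableAt)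
    (fun s => (hasDerivAt_add_I_smul hY₁ hY₂ s).deriv) t τ

end BlockSystem

/-- With initial data `Y₁(τ) = 0`, `Y₂(τ) = I` in the system `Y' = M(t)Y`,
`M(t) = [[iF_t, -F_t],[F_t, iF_t]]`, one has `Y₁(t) = (i/2)(R(t,τ) - I)`,
`Y₂(t) = (1/2)(R(t,τ) + I)`, hence `-Y₁(t)Y₂(t)⁻¹ = -i(R(t,τ) - I)(R(t,τ) + I)⁻¹`
whenever `R(t,τ) + I` is invertible. -/
theorem block_system_cayley (n : ℕ)
    (F : ℝ → Matrix (Fin n ⊕ Fin n) (Fin n ⊕ Fin n) ℂ) (hFcont : Continuous F)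
    (Y₁ Y₂ : ℝ → Matrix (Fin n ⊕ Fin n) (Fin n ⊕ Fin n) ℂ)
    (hY₁ : ∀ t, HasDerivAt Y₁ (Complex.I • (F t * Y₁ t) - F t * Y₂ t) t)
    (hY₂ : ∀ t, HasDerivAt Y₂ (F t * Y₁ t + Complex.I • (F t * Y₂ t)) t)
    (R : ℝ → ℝ → Matrix (Fin n ⊕ Fin n) (Fin n ⊕ Fin n) ℂ)
    (hR : ∀ τ t : ℝ, HasDerivAt (fun s => R s τ) ((2 * Complex.I) • (F t * R t τ)) t)
    (hRinit : ∀ τ : ℝ, R τ τ = 1)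
    (τ : ℝ) (hY₁init : Y₁ τ = 0) (hY₂init : Y₂ τ = 1) :
    ∀ t, Y₁ t = (Complex.I / 2) • (R t τ - 1) ∧
      Y₂ t = ((1 : ℂ) / 2) • (R t τ + 1) ∧
      (IsUnit (R t τ + 1).det →
        -(Y₁ t * (Y₂ t)⁻¹) = (-Complex.I) • ((R t τ - 1) * (R t τ + 1)⁻¹)) := by
  have hU : ∀ t, Y₂ t + I • Y₁ t = 1 := fun t => by
    simpa [hY₁init, hY₂init] using add_I_smul_eq_const hY₁ hY₂ τ t
  have hV : (fun s => Y₂ s - I • Y₁ s) = fun s => R s τ :=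
    ODE_solution_unique_linear (A := fun s => (2 * I) • mulLeftCLM (F s))
      ((mulLeftCLM.continuous.comp hFcont).const_smul (2 * I))
      (hasDerivAt_sub_I_smul hY₁ hY₂) (hR τ) (t₀ := τ) (by simp [hY₁init, hY₂init, hRinit])
  intro t
  obtain ⟨hY₁eq, hY₂eq⟩ := smul_eq_of_add_I_smul_of_sub_I_smul (hU t) (congrFun hV t)
  refine ⟨hY₁eq, hY₂eq, fun hdet => ?_⟩
  rw [hY₁eq, hY₂eq, ← neg_mul, ← neg_smul, Matrix.smul_mul_smul_inv_eq _ _ hdet]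
  congr 1
  ring
end

section
/- The function h(t,τ) = -(1/2)Log(2^{-2n}·det(R(t,τ) + I)) satisfies ∂_t h(t,τ) = (1/2)Tr(S(t,τ)F_t), where S(t,τ) = -i(R(t,τ) - I)(R(t,τ) + I)^{-1}, F_t = σQ_t is a Hamilton map (so Tr F_t = 0), R solves d/dt R = 2iF_t R, R(τ,τ) = I, and t is close enough to τ that det(R(t,τ) + I) avoids the negative real axis. -/
open Matrix

attribute [local instance] Matrix.normedAddCommGroup Matrix.normedSpace

lemma hasDerivAt_det' {m : Type*} [Fintype m] [DecidableEq m]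
    {M : ℝ → Matrix m m ℂ} {M' : Matrix m m ℂ} {t : ℝ}
    (h : HasDerivAt M M' t) :
    HasDerivAt (fun s => (M s).det) (((M t).adjugate * M').trace) t := by
  have hentry : ∀ i j, HasDerivAt (fun s => M s i j) (M' i j) t := fun i j =>
    (hasDerivAt_pi.1 ((hasDerivAt_pi.1 h) i)) j
  have hprod : ∀ σ : Equiv.Perm m, HasDerivAt (fun s => ∏ i, M s (σ i) i)
      (∑ i, (∏ j ∈ Finset.univ.erase i, M t (σ j) j) • M' (σ i) i) t :=
    fun σ => HasDerivAt.fun_finsetProd (fun i _ => hentry (σ i) i)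
  have hdet : HasDerivAt (fun s => (M s).det)
      (∑ σ : Equiv.Perm m, ((Equiv.Perm.sign σ : ℤ) : ℂ) *
        ∑ i, (∏ j ∈ Finset.univ.erase i, M t (σ j) j) • M' (σ i) i) t := by
    simp only [Matrix.det_apply']
    exact HasDerivAt.fun_sum (fun σ _ => (hprod σ).const_mul _)
  convert hdet using 1
  have key : ((M t).adjugate * M').trace
      = ∑ i, ((M t).updateCol i (fun k => M' k i)).det := by
    rw [Matrix.trace]
    congr 1; ext i
    rw [Matrix.diag_apply, Matrix.mul_apply, ← Matrix.cramer_apply,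
      Matrix.cramer_eq_adjugate_mulVec]
    rfl
  rw [key]
  simp_rw [Finset.mul_sum]
  rw [Finset.sum_comm]
  refine Finset.sum_congr rfl fun i _ => ?_
  rw [Matrix.det_apply']
  refine Finset.sum_congr rfl fun σ _ => ?_
  rw [← Finset.mul_prod_erase Finset.univ _ (Finset.mem_univ i)]
  rw [Matrix.updateCol_self]
  have : ∏ j ∈ Finset.univ.erase i, ((M t).updateCol i fun k => M' k i) (σ j) j
      = ∏ j ∈ Finset.univ.erase i, M t (σ j) j := by
    refine Finset.prod_congr rfl fun j hj => ?_
    rw [Matrix.updateCol_apply, if_neg (Finset.mem_erase.1 hj).1]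
  rw [this, smul_eq_mul]
  ring

/-- The function `h(t,τ) = -(1/2)Log(2^{-2n} det(R(t,τ) + I))` satisfies
`∂_t h = (1/2)Tr(S(t,τ)F_t)` where `S(t,τ) = -i(R(t,τ) - I)(R(t,τ) + I)⁻¹` and
`F_t = σQ_t` is a Hamilton map, provided `det(R(t,τ) + I)` avoids the negative real axis. -/
theorem deriv_log_det (n : ℕ)
    (Q : ℝ → Matrix (Fin n ⊕ Fin n) (Fin n ⊕ Fin n) ℂ)
    (hQsymm : ∀ t, (Q t).IsSymm) (hQcont : Continuous Q)
    (τ : ℝ) (R : ℝ → Matrix (Fin n ⊕ Fin n) (Fin n ⊕ Fin n) ℂ)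
    (hR : ∀ t, HasDerivAt R ((2 * Complex.I) • (sympMat n * Q t * R t)) t)
    (hRτ : R τ = 1)
    (t : ℝ) (hinv : IsUnit (R t + 1).det)
    (hslit : ((2 : ℂ) ^ (-(2 * (n : ℤ))) * (R t + 1).det) ∈ Complex.slitPlane) :
    HasDerivAt
      (fun s => -((1 : ℂ) / 2) * Complex.log ((2 : ℂ) ^ (-(2 * (n : ℤ))) * (R s + 1).det))
      (((1 : ℂ) / 2) *
        (((-Complex.I) • ((R t - 1) * (R t + 1)⁻¹)) * (sympMat n * Q t)).trace) t := by
  set F := sympMat n * Q t with hF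
  set A := R t + 1 with hA
  set c : ℂ := (2 : ℂ) ^ (-(2 * (n : ℤ))) with hc
  have hc0 : c ≠ 0 := zpow_ne_zero _ two_ne_zero
  have hdet0 : A.det ≠ 0 := hinv.ne_zero
  -- derivative of s ↦ R s + 1
  have hM : HasDerivAt (fun s => R s + 1) ((2 * Complex.I) • (F * R t)) t :=
    (hR t).add_const 1
  have hdet : HasDerivAt (fun s => (R s + 1).det)
      ((A.adjugate * ((2 * Complex.I) • (F * R t))).trace) t := hasDerivAt_det' hM
  have hmain := (((hdet.const_mul c).clog_real hslit)).const_mul (-((1 : ℂ) / 2))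
  convert hmain using 1
  case e'_4 => rfl
  -- now prove the derivative values agree
  have hAinv : A * A⁻¹ = 1 := Matrix.mul_nonsing_inv A hinv
  have hadj : A.adjugate = A.det • A⁻¹ := by
    rw [Matrix.inv_def, smul_smul, Ring.inverse_eq_inv', mul_inv_cancel₀ hdet0, one_smul]
  -- trace of F is zero
  have hσT : (sympMat n)ᵀ = -(sympMat n) := by
    simp [sympMat, Matrix.fromBlocks_transpose, Matrix.fromBlocks_neg]
  have htrF : F.trace = 0 := by
    have h1 : F.trace = Fᵀ.trace := (Matrix.trace_transpose _).symm
    have h2 : Fᵀ = (Q t) * (-(sympMat n)) := by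
      rw [hF, Matrix.transpose_mul, hσT, (hQsymm t).eq]
    have h3 : Fᵀ.trace = -F.trace := by
      rw [h2, Matrix.mul_neg, Matrix.trace_neg, Matrix.trace_mul_comm, hF]
    have h4 := h1.trans h3
    linear_combination h4 / 2
  have hRA : R t * A⁻¹ = 1 - A⁻¹ := by
    have hR1 : R t = A - 1 := by rw [hA]; abel
    rw [hR1, Matrix.sub_mul, hAinv, Matrix.one_mul]
  have hR1A : (R t - 1) * A⁻¹ = 1 - A⁻¹ - A⁻¹ := by
    rw [Matrix.sub_mul, hRA, Matrix.one_mul]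
  set T : ℂ := (A⁻¹ * F).trace with hT
  have htr1 : (A⁻¹ * (F * R t)).trace = -T := by
    rw [← Matrix.mul_assoc, Matrix.trace_mul_comm, ← Matrix.mul_assoc, hRA,
      Matrix.sub_mul, Matrix.one_mul, Matrix.trace_sub, htrF]
    rw [← hT]; ring
  have htr2 : (((-Complex.I) • ((R t - 1) * A⁻¹)) * F).trace
      = -Complex.I * (-(2 * T)) := by
    rw [Matrix.smul_mul, Matrix.trace_smul, hR1A, Matrix.sub_mul, Matrix.sub_mul,
      Matrix.one_mul, Matrix.trace_sub, Matrix.trace_sub, htrF, smul_eq_mul]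
    ring_nf
    rw [← hT]
  have htr3 : (A.adjugate * ((2 * Complex.I) • (F * R t))).trace
      = A.det * (2 * Complex.I * (-T)) := by
    rw [hadj, Matrix.smul_mul, Matrix.mul_smul, smul_smul, Matrix.trace_smul,
      smul_eq_mul, htr1]
    ring
  rw [htr2, htr3]
  rw [← hA]
  field_simp
end

section
/- If T₁ and T₂ are complex symplectic linear transformations of ℂ^{2n} that are non-negative (i.e., i(σ(conj(T X), T X) - σ(conj(X), X)) ≥ 0 for all X), then the composition T₁T₂ is also a non-negative complex symplectic linear transformation. -/
open Matrix
open scoped ComplexOrder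

noncomputable def hermSympForm (n : ℕ) (X : Fin n ⊕ Fin n → ℂ) : ℂ :=
  Complex.I * sympForm n (star X) X

lemma nonneg_iff_hermSympForm_le (n : ℕ) (T : Matrix (Fin n ⊕ Fin n) (Fin n ⊕ Fin n) ℂ)
    (X : Fin n ⊕ Fin n → ℂ) :
    0 ≤ Complex.I * (sympForm n (star (T *ᵥ X)) (T *ᵥ X) - sympForm n (star X) X) ↔
      hermSympForm n X ≤ hermSympForm n (T *ᵥ X) := by
  rw [mul_sub, sub_nonneg, hermSympForm, hermSympForm]

/-- The composition of two non-negative complex symplectic linear transformations is again a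
non-negative complex symplectic linear transformation. -/
theorem comp_nonneg_symplectic (n : ℕ)
    (T₁ T₂ : Matrix (Fin n ⊕ Fin n) (Fin n ⊕ Fin n) ℂ)
    (hT₁unit : IsUnit T₁.det) (hT₂unit : IsUnit T₂.det)
    (hT₁symp : ∀ X Y : Fin n ⊕ Fin n → ℂ, sympForm n (T₁ *ᵥ X) (T₁ *ᵥ Y) = sympForm n X Y)
    (hT₂symp : ∀ X Y : Fin n ⊕ Fin n → ℂ, sympForm n (T₂ *ᵥ X) (T₂ *ᵥ Y) = sympForm n X Y)
    (hT₁nonneg : ∀ X : Fin n ⊕ Fin n → ℂ,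
      0 ≤ Complex.I * (sympForm n (star (T₁ *ᵥ X)) (T₁ *ᵥ X) - sympForm n (star X) X))
    (hT₂nonneg : ∀ X : Fin n ⊕ Fin n → ℂ,
      0 ≤ Complex.I * (sympForm n (star (T₂ *ᵥ X)) (T₂ *ᵥ X) - sympForm n (star X) X)) :
    IsUnit (T₁ * T₂).det ∧
    (∀ X Y : Fin n ⊕ Fin n → ℂ,
      sympForm n ((T₁ * T₂) *ᵥ X) ((T₁ * T₂) *ᵥ Y) = sympForm n X Y) ∧
    (∀ X : Fin n ⊕ Fin n → ℂ,
      0 ≤ Complex.I * (sympForm n (star ((T₁ * T₂) *ᵥ X)) ((T₁ * T₂) *ᵥ X)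
            - sympForm n (star X) X)) := by
  refine ⟨det_mul T₁ T₂ ▸ hT₁unit.mul hT₂unit, fun X Y => ?_, fun X => ?_⟩
  · rw [← mulVec_mulVec, ← mulVec_mulVec, hT₁symp, hT₂symp]
  · rw [nonneg_iff_hermSympForm_le, ← mulVec_mulVec]
    exact ((nonneg_iff_hermSympForm_le n T₂ X).1 (hT₂nonneg X)).trans
      ((nonneg_iff_hermSympForm_le n T₁ _).1 (hT₁nonneg _))
end
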